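/- Let H be a connected simple finite graph that is t-total-critical for some t ≥ Δ(H) + 2, i.e., χ''(H) = t and χ''(H − e) ≤ t − 1 for every edge e. Then H has no cut-vertices (no vertex of H whose deletion disconnects H). -/

import Mathlib

open SimpleGraph

/-- The total graph `T(G)` of a simple graph `G`: its vertices are the vertices and edges
of `G`, with two elements adjacent iff they are adjacent or incident in `G`. -/
def totalGraph {V : Type*} (G : SimpleGraph V) : SimpleGraph (V ⊕ G.edgeSet) :=
  SimpleGraph.fromRel fun x y =>
    match x, y with
    | Sum.inl u, Sum.inl v => G.Adj u v
    | Sum.inl u, Sum.inr e => u ∈ (e : Sym2 V)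
    | Sum.inr e, Sum.inl u => u ∈ (e : Sym2 V)
    | Sum.inr e, Sum.inr f => ∃ u, u ∈ (e : Sym2 V) ∧ u ∈ (f : Sym2 V)

/-- `cv`, `ce` form a total coloring of `G`: adjacent vertices get distinct colors, edges
sharing an endpoint get distinct colors, and every edge gets a color distinct from the colors
of both of its endpoints. -/
def IsTotalColoring {V : Type*} (G : SimpleGraph V) (cv : V → ℕ) (ce : Sym2 V → ℕ) : Prop :=
  (∀ ⦃u v⦄, G.Adj u v → cv u ≠ cv v) ∧
  (∀ ⦃u v w⦄, G.Adj u v → G.Adj u w → v ≠ w → ce s(u, v) ≠ ce s(u, w)) ∧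
  (∀ ⦃u v⦄, G.Adj u v → ce s(u, v) ≠ cv u ∧ ce s(u, v) ≠ cv v)

/-- The total chromatic number `χ''(G)`: the least `k` such that `G` has a total coloring
using colors `0, …, k-1`. -/
noncomputable def totalChromaticNumber {V : Type*} (G : SimpleGraph V) : ℕ :=
  sInf {k | ∃ cv ce, IsTotalColoring G cv ce ∧ (∀ v, cv v < k) ∧ ∀ e ∈ G.edgeSet, ce e < k}

/-- `H` has a minor isomorphic to `K`: there are pairwise disjoint nonempty branch sets,
one for each vertex of `K`, each inducing a connected subgraph of `H`, with an edge of `H`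
between the branch sets of any two adjacent vertices of `K`. -/
def HasMinor {W U : Type*} (H : SimpleGraph W) (K : SimpleGraph U) : Prop :=
  ∃ B : U → Set W,
    (∀ i, (B i).Nonempty) ∧
    (Pairwise fun i j => Disjoint (B i) (B j)) ∧
    (∀ i, (H.induce (B i)).Connected) ∧
    ∀ ⦃i j⦄, K.Adj i j → ∃ u ∈ B i, ∃ v ∈ B j, H.Adj u v

/-- `H` has a clique minor of order `t` (a `K_t`-minor): `t` pairwise disjoint nonempty
vertex subsets, each inducing a connected subgraph, with an edge between every pair. -/
def HasCliqueMinor {W : Type*} (H : SimpleGraph W) (t : ℕ) : Prop :=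
  ∃ B : Fin t → Set W,
    (∀ i, (B i).Nonempty) ∧
    (Pairwise fun i j => Disjoint (B i) (B j)) ∧
    (∀ i, (H.induce (B i)).Connected) ∧
    Pairwise fun i j => ∃ u ∈ B i, ∃ v ∈ B j, H.Adj u v

/-- The Hadwiger number `η(H)`: the largest `t` such that `H` has a `K_t`-minor. -/
noncomputable def hadwigerNumber {W : Type*} (H : SimpleGraph W) : ℕ :=
  sSup {t | HasCliqueMinor H t}

/-- A graph is `c`-vertex-connected if it has more than `c` vertices and deleting any set of
fewer than `c` vertices leaves a connected graph. -/
def IsKConnected {V : Type*} [Fintype V] (c : ℕ) (G : SimpleGraph V) : Prop :=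
  c < Fintype.card V ∧
    ∀ S : Finset V, S.card < c → (G.induce ((S : Set V)ᶜ)).Connected

/-- `G` is planar (Wagner's characterization): `G` has neither a `K₅`-minor nor a
`K₃,₃`-minor. -/
def IsPlanar {V : Type*} (G : SimpleGraph V) : Prop :=
  ¬ HasMinor G (⊤ : SimpleGraph (Fin 5)) ∧
  ¬ HasMinor G (completeBipartiteGraph (Fin 3) (Fin 3))

/-- `c` is a proper edge coloring of `G`: edges sharing an endpoint get distinct colors. -/
def IsProperEdgeColoring {V : Type*} (G : SimpleGraph V) (c : Sym2 V → ℕ) : Prop :=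
  ∀ ⦃u v w⦄, G.Adj u v → G.Adj u w → v ≠ w → c s(u, v) ≠ c s(u, w)

/-- The chromatic index `χ'(G)`: the least `k` such that `G` has a proper edge coloring
using colors `0, …, k-1`. -/
noncomputable def chromaticIndex {V : Type*} (G : SimpleGraph V) : ℕ :=
  sInf {k | ∃ c : Sym2 V → ℕ, IsProperEdgeColoring G c ∧ ∀ e ∈ G.edgeSet, c e < k}

/-- `G` is `k`-edge-choosable: for every assignment of a list of `k` colors to each edge
there is a proper edge coloring choosing each edge's color from its list. -/
def EdgeChoosable {V : Type*} (G : SimpleGraph V) (k : ℕ) : Prop :=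
  ∀ L : Sym2 V → Finset ℕ, (∀ e ∈ G.edgeSet, (L e).card = k) →
    ∃ c : Sym2 V → ℕ, IsProperEdgeColoring G c ∧ ∀ e ∈ G.edgeSet, c e ∈ L e

/-- The edge choosability `ch'(G)`: the least `k` such that `G` is `k`-edge-choosable. -/
noncomputable def edgeChoosability {V : Type*} (G : SimpleGraph V) : ℕ :=
  sInf {k | EdgeChoosable G k}

/-- The subdivision of `H`: every edge `uv` is replaced by a path `u – w_{uv} – v` through
a new vertex `w_{uv}` corresponding to that edge. -/
def subdivision {V : Type*} (H : SimpleGraph V) : SimpleGraph (V ⊕ H.edgeSet) :=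
  SimpleGraph.fromRel fun x y =>
    match x, y with
    | Sum.inl u, Sum.inr e => u ∈ (e : Sym2 V)
    | _, _ => False

/-- The square `G²` of `G`: two distinct vertices are adjacent iff their distance in `G`
is at most `2`, i.e. they are adjacent or have a common neighbour. -/
def squareGraph {V : Type*} (G : SimpleGraph V) : SimpleGraph V :=
  SimpleGraph.fromRel fun u v => G.Adj u v ∨ ∃ w, G.Adj u w ∧ G.Adj w v

/-!
Suppose `v` were a cut-vertex, splitting `H` into a side `X ∋ v` containing an edge `e₁` and
the rest, containing an edge `e₂`. Criticality gives `(t-1)`-total colorings of `H - e₂`, which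
is correct on the edges inside `X`, and of `H - e₁`, which is correct on all other edges. After
permuting the colors of the second one so that `v` gets the same color in both and the edges at
`v` on the two sides get different colors — possible because `deg v + 1 ≤ Δ + 1 ≤ t - 1` — the
two colorings glue to a `(t-1)`-total coloring of `H`.
-/

open Set

theorem exists_injOn_Iio_extend {k : ℕ} {s : Set ℕ} {f : ℕ → ℕ} (hs : s ⊆ Iio k)
    (hf : MapsTo f s (Iio k)) (hinj : InjOn f s) :
    ∃ π : ℕ → ℕ, MapsTo π (Iio k) (Iio k) ∧ InjOn π (Iio k) ∧ EqOn π f s := by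
  obtain ⟨g, hg⟩ := MapsTo.exists_equiv_extend_of_card_eq (α := Fin k) (t := Finset.range k)
    (s := Fin.val ⁻¹' s) (f := f ∘ Fin.val) (by simp)
    (fun i hi => by simpa using hf hi) (fun i hi j hj h => Fin.ext (hinj hi hj h))
  refine ⟨fun n => if h : n < k then g ⟨n, h⟩ else n, fun n hn => ?_, fun m hm n hn h => ?_,
    fun n hn => ?_⟩
  · rw [mem_Iio] at hn
    simpa only [dif_pos hn, mem_Iio] using Finset.mem_range.mp (g ⟨n, hn⟩).2
  · rw [mem_Iio] at hm hn
    simp only [dif_pos hm, dif_pos hn] at h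
    exact congrArg Fin.val (g.injective (Subtype.ext h))
  · have hnk : n < k := hs hn
    exact (dif_pos hnk).trans (hg ⟨n, hnk⟩ hn)

theorem exists_injOn_Iio_apply_eq_and_notMem_of_card_add_card_lt {k a b : ℕ}
    {P Q : Finset ℕ} (ha : a < k) (hb : b < k) (hQ : ∀ c ∈ Q, c < k) (hbQ : b ∉ Q)
    (hcard : P.card + Q.card < k) :
    ∃ π : ℕ → ℕ, MapsTo π (Iio k) (Iio k) ∧ InjOn π (Iio k) ∧ π b = a ∧ ∀ c ∈ Q, π c ∉ P := by
  classical
  have hfree : Q.card ≤ (Finset.range k \ insert a P).card := calc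
    Q.card ≤ k - (P.card + 1) := by omega
    _ ≤ k - (insert a P).card := by gcongr; exact Finset.card_insert_le a P
    _ ≤ _ := by simpa using Finset.le_card_sdiff (insert a P) (Finset.range k)
  -- `π` sends `b ↦ a` and `Q` injectively into the colors below `k` outside `insert a P`
  obtain ⟨f, hfQ, hfinj⟩ := (Q : Set ℕ).toFinite.exists_injOn_of_encard_le
    (t := ((Finset.range k \ insert a P : Finset ℕ) : Set ℕ)) (by
      rw [encard_coe_eq_coe_finsetCard, encard_coe_eq_coe_finsetCard]; exact_mod_cast hfree)
  have hfQ' : ∀ c ∈ Q, f c < k ∧ f c ≠ a ∧ f c ∉ P := fun c hc => by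
    simpa using hfQ hc
  have hupd : EqOn (Function.update f b a) f Q := fun c hc =>
    Function.update_of_ne (by rintro rfl; exact hbQ hc) a f
  obtain ⟨π, hmaps, hinj, heq⟩ := exists_injOn_Iio_extend (s := insert b ↑Q)
    (f := Function.update f b a) (insert_subset hb hQ)
    (by
      rintro c (rfl | hc)
      · simpa using ha
      · rw [mem_Iio, hupd hc]; exact (hfQ' c hc).1)
    (by
      refine (injOn_insert hbQ).2 ⟨hfinj.congr hupd.symm, ?_⟩
      rintro ⟨c, hc, h⟩
      rw [hupd hc, Function.update_self] at h
      exact (hfQ' c hc).2.1 h)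
  refine ⟨π, hmaps, hinj, by simpa using heq (mem_insert b _), fun c hc => ?_⟩
  rw [heq (mem_insert_of_mem b hc), hupd hc]
  exact (hfQ' c hc).2.2

def IsKTotalColoring {V : Type*} (G : SimpleGraph V) (k : ℕ) (cv : V → ℕ) (ce : Sym2 V → ℕ) :
    Prop :=
  IsTotalColoring G cv ce ∧ (∀ v, cv v < k) ∧ ∀ e ∈ G.edgeSet, ce e < k

section TotalColoring

variable {V : Type*} {G : SimpleGraph V} {k : ℕ} {cv : V → ℕ} {ce : Sym2 V → ℕ}

theorem IsKTotalColoring.totalChromaticNumber_le (h : IsKTotalColoring G k cv ce) :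
    totalChromaticNumber G ≤ k :=
  Nat.sInf_le ⟨cv, ce, h⟩

theorem IsKTotalColoring.mono {m : ℕ} (h : IsKTotalColoring G k cv ce) (hkm : k ≤ m) :
    IsKTotalColoring G m cv ce :=
  ⟨h.1, fun v => (h.2.1 v).trans_le hkm, fun e he => (h.2.2 e he).trans_le hkm⟩

theorem IsKTotalColoring.comp {π : ℕ → ℕ} (h : IsKTotalColoring G k cv ce)
    (hmaps : MapsTo π (Iio k) (Iio k)) (hinj : InjOn π (Iio k)) :
    IsKTotalColoring G k (π ∘ cv) (π ∘ ce) := by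
  obtain ⟨⟨hvert, hedge, hinc⟩, hcv, hce⟩ := h
  refine ⟨⟨fun u v huv => ?_, fun u v w huv huw hvw => ?_, fun u v huv => ?_⟩,
    fun v => hmaps (hcv v), fun e he => hmaps (hce e he)⟩
  · exact hinj.ne (hcv u) (hcv v) (hvert huv)
  · exact hinj.ne (hce _ huv) (hce _ huw) (hedge huv huw hvw)
  · exact ⟨hinj.ne (hce _ huv) (hcv u) (hinc huv).1, hinj.ne (hce _ huv) (hcv v) (hinc huv).2⟩

variable (G) in
theorem exists_isKTotalColoring [Finite V] : ∃ k cv ce, IsKTotalColoring G k cv ce := by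
  obtain ⟨n, ⟨e⟩⟩ := Finite.exists_equiv_fin (V ⊕ Sym2 V)
  have he : ∀ x y, (e x : ℕ) = e y → x = y := fun x y h => e.injective (Fin.ext h)
  refine ⟨n, fun u => e (.inl u), fun x => e (.inr x), ⟨?_, ?_, ?_⟩, fun _ => (e _).2,
    fun _ _ => (e _).2⟩
  · exact fun u v huv h => huv.ne (Sum.inl_injective (he _ _ h))
  · exact fun u v w _ _ hvw h => hvw (Sym2.congr_right.mp (Sum.inr_injective (he _ _ h)))
  · exact fun u v _ => ⟨fun h => Sum.inr_ne_inl (he _ _ h), fun h => Sum.inr_ne_inl (he _ _ h)⟩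

theorem exists_isKTotalColoring_of_totalChromaticNumber_le [Finite V]
    (h : totalChromaticNumber G ≤ k) : ∃ cv ce, IsKTotalColoring G k cv ce := by
  obtain ⟨cv, ce, hc⟩ := Nat.sInf_mem (exists_isKTotalColoring G)
  exact ⟨cv, ce, hc.mono h⟩

variable (G) in
theorem totalChromaticNumber_le_one [Subsingleton V] : totalChromaticNumber G ≤ 1 := by
  have hG : ∀ ⦃u v⦄, ¬ G.Adj u v := fun u v huv => huv.ne (Subsingleton.elim u v)
  refine IsKTotalColoring.totalChromaticNumber_le (cv := 0) (ce := 0)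
    ⟨⟨fun u v huv => (hG huv).elim, fun u v _ huv => (hG huv).elim,
      fun u v huv => (hG huv).elim⟩, fun _ => one_pos, fun _ _ => one_pos⟩

end TotalColoring

section Separation

variable {V : Type*} {H G₁ G₂ : SimpleGraph V} {k : ℕ} {cv₁ cv₂ : V → ℕ}
  {ce₁ ce₂ : Sym2 V → ℕ} {X : Set V} {v : V}

theorem piecewise_eq_of_adj_of_notMem {α : Type*} {f₁ f₂ : V → α} [DecidablePred (· ∈ X)]
    (hsep : ∀ ⦃p q⦄, H.Adj p q → p ∈ X → q ∉ X → p = v) (hv : f₁ v = f₂ v) {p q : V}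
    (hpq : H.Adj p q) (hq : q ∉ X) : X.piecewise f₁ f₂ p = f₂ p := by
  by_cases hp : p ∈ X
  · exact (piecewise_eq_of_mem X f₁ f₂ hp).trans (hsep hpq hp hq ▸ hv)
  · exact piecewise_eq_of_notMem X f₁ f₂ hp

theorem IsTotalColoring.piecewise [DecidablePred (· ∈ X)] [DecidablePred (· ∈ X.sym2)]
    (h₁ : IsTotalColoring G₁ cv₁ ce₁) (h₂ : IsTotalColoring G₂ cv₂ ce₂)
    (hsep : ∀ ⦃p q⦄, H.Adj p q → p ∈ X → q ∉ X → p = v)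
    (hG₁ : H.edgeSet ∩ X.sym2 ⊆ G₁.edgeSet) (hG₂ : H.edgeSet \ X.sym2 ⊆ G₂.edgeSet)
    (hv : cv₁ v = cv₂ v)
    (hvE : ∀ ⦃a b⦄, H.Adj v a → H.Adj v b → a ∈ X → b ∉ X → ce₁ s(v, a) ≠ ce₂ s(v, b)) :
    IsTotalColoring H (X.piecewise cv₁ cv₂) (X.sym2.piecewise ce₁ ce₂) := by
  obtain ⟨hvert₁, hedge₁, hinc₁⟩ := h₁
  obtain ⟨hvert₂, hedge₂, hinc₂⟩ := h₂
  set cv := X.piecewise cv₁ cv₂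
  set ce := X.sym2.piecewise ce₁ ce₂
  have hin : ∀ ⦃p q⦄, H.Adj p q → p ∈ X → q ∈ X → G₁.Adj p q ∧ cv p = cv₁ p ∧
      cv q = cv₁ q ∧ ce s(p, q) = ce₁ s(p, q) := fun p q hpq hp hq =>
    ⟨hG₁ ⟨hpq, mk_mem_sym2_iff.2 ⟨hp, hq⟩⟩, piecewise_eq_of_mem _ _ _ hp,
      piecewise_eq_of_mem _ _ _ hq, piecewise_eq_of_mem _ _ _ (mk_mem_sym2_iff.2 ⟨hp, hq⟩)⟩
  have hout : ∀ ⦃p q⦄, H.Adj p q → ¬(p ∈ X ∧ q ∈ X) → G₂.Adj p q ∧ cv p = cv₂ p ∧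
      cv q = cv₂ q ∧ ce s(p, q) = ce₂ s(p, q) := fun p q hpq hpqX =>
    ⟨(mem_edgeSet _).1 (hG₂ ⟨hpq, hpqX⟩),
      if hq : q ∈ X then piecewise_eq_of_notMem _ _ _ fun hp => hpqX ⟨hp, hq⟩
      else piecewise_eq_of_adj_of_notMem hsep hv hpq hq,
      if hp : p ∈ X then piecewise_eq_of_notMem _ _ _ fun hq => hpqX ⟨hp, hq⟩
      else piecewise_eq_of_adj_of_notMem hsep hv hpq.symm hp,
      piecewise_eq_of_notMem _ _ _ hpqX⟩
  refine ⟨fun p q hpq => ?_, fun u p q hup huq hpq => ?_, fun p q hpq => ?_⟩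
  · by_cases hpqX : p ∈ X ∧ q ∈ X
    · obtain ⟨hG, hp, hq, -⟩ := hin hpq hpqX.1 hpqX.2
      rw [hp, hq]; exact hvert₁ hG
    · obtain ⟨hG, hp, hq, -⟩ := hout hpq hpqX
      rw [hp, hq]; exact hvert₂ hG
  · by_cases hupX : u ∈ X ∧ p ∈ X <;> by_cases huqX : u ∈ X ∧ q ∈ X
    · rw [(hin hup hupX.1 hupX.2).2.2.2, (hin huq huqX.1 huqX.2).2.2.2]
      exact hedge₁ (hin hup hupX.1 hupX.2).1 (hin huq huqX.1 huqX.2).1 hpq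
    · have hq : q ∉ X := fun hq => huqX ⟨hupX.1, hq⟩
      obtain rfl := hsep huq hupX.1 hq
      rw [(hin hup hupX.1 hupX.2).2.2.2, (hout huq huqX).2.2.2]
      exact hvE hup huq hupX.2 hq
    · have hp : p ∉ X := fun hp => hupX ⟨huqX.1, hp⟩
      obtain rfl := hsep hup huqX.1 hp
      rw [(hout hup hupX).2.2.2, (hin huq huqX.1 huqX.2).2.2.2]
      exact (hvE huq hup huqX.2 hp).symm
    · rw [(hout hup hupX).2.2.2, (hout huq huqX).2.2.2]
      exact hedge₂ (hout hup hupX).1 (hout huq huqX).1 hpq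
  · by_cases hpqX : p ∈ X ∧ q ∈ X
    · obtain ⟨hG, hp, hq, he⟩ := hin hpq hpqX.1 hpqX.2
      rw [hp, hq, he]; exact hinc₁ hG
    · obtain ⟨hG, hp, hq, he⟩ := hout hpq hpqX
      rw [hp, hq, he]; exact hinc₂ hG

theorem IsKTotalColoring.piecewise [DecidablePred (· ∈ X)] [DecidablePred (· ∈ X.sym2)]
    (h₁ : IsKTotalColoring G₁ k cv₁ ce₁) (h₂ : IsKTotalColoring G₂ k cv₂ ce₂)
    (hsep : ∀ ⦃p q⦄, H.Adj p q → p ∈ X → q ∉ X → p = v)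
    (hG₁ : H.edgeSet ∩ X.sym2 ⊆ G₁.edgeSet) (hG₂ : H.edgeSet \ X.sym2 ⊆ G₂.edgeSet)
    (hv : cv₁ v = cv₂ v)
    (hvE : ∀ ⦃a b⦄, H.Adj v a → H.Adj v b → a ∈ X → b ∉ X → ce₁ s(v, a) ≠ ce₂ s(v, b)) :
    IsKTotalColoring H k (X.piecewise cv₁ cv₂) (X.sym2.piecewise ce₁ ce₂) := by
  refine ⟨h₁.1.piecewise h₂.1 hsep hG₁ hG₂ hv hvE, fun u => ?_, fun e he => ?_⟩
  · by_cases hu : u ∈ X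
    · exact (piecewise_eq_of_mem X cv₁ cv₂ hu).trans_lt (h₁.2.1 u)
    · exact (piecewise_eq_of_notMem X cv₁ cv₂ hu).trans_lt (h₂.2.1 u)
  · by_cases heX : e ∈ X.sym2
    · exact (piecewise_eq_of_mem X.sym2 ce₁ ce₂ heX).trans_lt (h₁.2.2 e (hG₁ ⟨he, heX⟩))
    · exact (piecewise_eq_of_notMem X.sym2 ce₁ ce₂ heX).trans_lt (h₂.2.2 e (hG₂ ⟨he, heX⟩))

theorem totalChromaticNumber_le_of_separation [Fintype (H.neighborSet v)]
    (h₁ : IsKTotalColoring G₁ k cv₁ ce₁) (h₂ : IsKTotalColoring G₂ k cv₂ ce₂)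
    (hsep : ∀ ⦃p q⦄, H.Adj p q → p ∈ X → q ∉ X → p = v)
    (hG₁ : H.edgeSet ∩ X.sym2 ⊆ G₁.edgeSet) (hG₂ : H.edgeSet \ X.sym2 ⊆ G₂.edgeSet)
    (hdeg : H.degree v < k) : totalChromaticNumber H ≤ k := by
  classical
  set N₁ := (H.neighborFinset v).filter (· ∈ X)
  set N₂ := (H.neighborFinset v).filter (· ∉ X)
  have hG₂v : ∀ b ∈ N₂, G₂.Adj v b := fun b hb => by
    rw [Finset.mem_filter, mem_neighborFinset] at hb
    exact (mem_edgeSet _).1 (hG₂ ⟨hb.1, fun h => hb.2 h.2⟩)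
  obtain ⟨π, hmaps, hinj, hπv, hπE⟩ := exists_injOn_Iio_apply_eq_and_notMem_of_card_add_card_lt
    (P := N₁.image fun a => ce₁ s(v, a)) (Q := N₂.image fun b => ce₂ s(v, b))
    (h₁.2.1 v) (h₂.2.1 v)
    (by simpa using fun b hb => h₂.2.2 _ (hG₂v b hb))
    (by simpa using fun b hb => ((h₂.1.2.2 (hG₂v b hb)).1))
    (calc _ ≤ N₁.card + N₂.card := by gcongr <;> exact Finset.card_image_le
        _ = H.degree v := by
          rw [Finset.card_filter_add_card_filter_not, card_neighborFinset_eq_degree]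
        _ < k := hdeg)
  have hvE : ∀ ⦃a b⦄, H.Adj v a → H.Adj v b → a ∈ X → b ∉ X →
      ce₁ s(v, a) ≠ (π ∘ ce₂) s(v, b) := fun a b ha hb haX hbX heq =>
    hπE (ce₂ s(v, b)) (Finset.mem_image_of_mem _ (by simpa [N₂] using ⟨hb, hbX⟩))
      (Finset.mem_image.2 ⟨a, by simpa [N₁] using ⟨ha, haX⟩, heq⟩)
  exact (h₁.piecewise (h₂.comp hmaps hinj) hsep hG₁ hG₂ hπv.symm hvE).totalChromaticNumber_le

theorem exists_separation_of_not_preconnected_induce (h : ¬ (H.induce {v}ᶜ).Preconnected) :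
    ∃ X : Set V, (∃ x ∈ X, x ≠ v) ∧ (∃ y, y ∉ X) ∧
      ∀ ⦃p q⦄, H.Adj p q → p ∈ X → q ∉ X → p = v := by
  simp only [Preconnected, not_forall] at h
  obtain ⟨x, y, hxy⟩ := h
  refine ⟨{u | u = v ∨ ∃ hu : u ≠ v, (H.induce {v}ᶜ).Reachable x ⟨u, hu⟩},
    ⟨x, .inr ⟨x.2, .rfl⟩, x.2⟩, ⟨y, ?_⟩, ?_⟩
  · rintro (h | ⟨_, h⟩)
    exacts [y.2 h, hxy h]
  · rintro p q hpq (rfl | ⟨hp, hr⟩) hq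
    · rfl
    · simp only [mem_ofPred_eq, not_or, not_exists] at hq
      exact (hq.2 hq.1 (hr.trans (induce_adj.2 hpq).reachable)).elim

end Separation

/-- a connected `t`-total-critical graph with `t ≥ Δ(H) + 2` has no
cut-vertices: deleting any vertex leaves a connected graph. -/
theorem no_cutVertex_of_totalCritical {V : Type*} [Fintype V] (H : SimpleGraph V)
    [DecidableRel H.Adj] (t : ℕ) (ht : H.maxDegree + 2 ≤ t) (hconn : H.Connected)
    (hchi : totalChromaticNumber H = t)
    (hcrit : ∀ e ∈ H.edgeSet, totalChromaticNumber (H.deleteEdges {e}) ≤ t - 1) :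
    ∀ v : V, (H.induce ({v}ᶜ : Set V)).Connected := by
  intro v
  by_contra hnc
  rw [connected_iff, not_and_or] at hnc
  rcases hnc with hnp | hempty
  · obtain ⟨X, ⟨x, hxX, hxv⟩, ⟨y, hyX⟩, hsep⟩ :=
      exists_separation_of_not_preconnected_induce hnp
    have : Nontrivial V := ⟨⟨x, v, hxv⟩⟩
    obtain ⟨x', hxx'⟩ := hconn.preconnected.exists_adj_of_nontrivial x
    obtain ⟨y', hyy'⟩ := hconn.preconnected.exists_adj_of_nontrivial y
    have he₁ : s(x, x') ∈ X.sym2 := ⟨hxX, by_contra fun hx' => hxv (hsep hxx' hxX hx')⟩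
    have he₂ : s(y, y') ∉ X.sym2 := fun h => hyX h.1
    obtain ⟨cv₁, ce₁, hc₁⟩ :=
      exists_isKTotalColoring_of_totalChromaticNumber_le (hcrit s(y, y') hyy')
    obtain ⟨cv₂, ce₂, hc₂⟩ :=
      exists_isKTotalColoring_of_totalChromaticNumber_le (hcrit s(x, x') hxx')
    have hG₁ : H.edgeSet ∩ X.sym2 ⊆ (H.deleteEdges {s(y, y')}).edgeSet := by
      rw [edgeSet_deleteEdges]
      exact subset_sdiff_singleton inter_subset_left fun h => he₂ h.2
    have hG₂ : H.edgeSet \ X.sym2 ⊆ (H.deleteEdges {s(x, x')}).edgeSet := by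
      rw [edgeSet_deleteEdges]
      exact subset_sdiff_singleton sdiff_subset fun h => h.2 he₁
    have := totalChromaticNumber_le_of_separation hc₁ hc₂ hsep hG₁ hG₂
      (by have := H.degree_le_maxDegree v; omega)
    omega
  · simp only [not_nonempty_iff, isEmpty_subtype, mem_compl_iff, mem_singleton_iff,
      not_not] at hempty
    have : Subsingleton V := ⟨fun a b => (hempty a).trans (hempty b).symm⟩
    have := totalChromaticNumber_le_one H
    omega
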